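/- arXiv:2503.20367 — 2 statements merged into one kernel-verified Lean document; each statement's English description precedes it below -/
import Mathlib

section
/- Let p and q be distinct odd primes and let n be a positive integer divisible by 2pq. Let S be a symmetric subset of ℤ_n \ {0}. If the circulant graph Cay(ℤ_n, S) exhibits PGFR between some pair of distinct vertices, then there exists y ∈ S such that p divides the representative of y in {0,…,n−1} or q divides the representative of y in {0,…,n−1} (equivalently, y maps to 0 under the natural projection ℤ_n → ℤ_p or under ℤ_n → ℤ_q). -/
open Matrix Filter

/-- Adjacency matrix of the Cayley graph `Cay(G,S)`: `A x y = 1` iff `x - y ∈ S`. -/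
noncomputable def cayAdj {G : Type*} [AddCommGroup G] [Fintype G] [DecidableEq G]
    (S : Finset G) : Matrix G G ℂ :=
  Matrix.of fun x y => if x - y ∈ S then 1 else 0

/-- Transition matrix `H(t) = exp(-i t A)` of the Cayley graph `Cay(G,S)`. -/
noncomputable def cayH {G : Type*} [AddCommGroup G] [Fintype G] [DecidableEq G]
    (S : Finset G) (t : ℝ) : Matrix G G ℂ :=
  NormedSpace.exp ((-(Complex.I * (t : ℂ))) • cayAdj S)

/-- `Cay(G,S)` exhibits pretty good fractional revival (PGFR) between `a` and `b`. -/
def ExhibitsPGFR {G : Type*} [AddCommGroup G] [Fintype G] [DecidableEq G]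
    (S : Finset G) (a b : G) : Prop :=
  ∃ (α β : ℂ) (t : ℕ → ℝ), β ≠ 0 ∧ ‖α‖ ^ 2 + ‖β‖ ^ 2 = 1 ∧
    Tendsto (fun k => (cayH S (t k)).mulVec ((Pi.single a 1 : G → ℂ))) atTop
      (nhds (α • (Pi.single a 1 : G → ℂ) + β • (Pi.single b 1 : G → ℂ)))

/-- `Cay(G,S)` exhibits fractional revival (FR) between `a` and `b`. -/
def ExhibitsFR {G : Type*} [AddCommGroup G] [Fintype G] [DecidableEq G]
    (S : Finset G) (a b : G) : Prop :=
  ∃ (t : ℝ), 0 < t ∧ ∃ α β : ℂ, β ≠ 0 ∧ ‖α‖ ^ 2 + ‖β‖ ^ 2 = 1 ∧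
    (cayH S t).mulVec ((Pi.single a 1 : G → ℂ)) =
      α • (Pi.single a 1 : G → ℂ) + β • (Pi.single b 1 : G → ℂ)

/-- `Cay(G,S)` exhibits pretty good state transfer (PGST) between `a` and `b`. -/
def ExhibitsPGST {G : Type*} [AddCommGroup G] [Fintype G] [DecidableEq G]
    (S : Finset G) (a b : G) : Prop :=
  ∃ (β : ℂ) (t : ℕ → ℝ), ‖β‖ = 1 ∧
    Tendsto (fun k => (cayH S (t k)).mulVec ((Pi.single a 1 : G → ℂ))) atTop
      (nhds (β • (Pi.single b 1 : G → ℂ)))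

/-- The eigenvalue `λ_r = Σ_{y ∈ S} exp(2πi r y / n)` of the circulant graph `Cay(ℤ_n, S)`. -/
noncomputable def circEig (n : ℕ) [NeZero n] (S : Finset (ZMod n)) (r : ℕ) : ℂ :=
  ∑ y ∈ S, Complex.exp (2 * Real.pi * Complex.I * r * y.val / n)

/-!
The characters `χ_r(x) = ψ(r x)` of `ℤ_n` are left eigenvectors of the adjacency matrix, with
eigenvalues `λ_r = ∑_{s ∈ S} ψ(r s)`, real because `S = -S`. Pairing `H(t_k) e_a` with `χ_r` shows
that PGFR from `a` to `b` forces `exp(-i t_k λ_r) → c(r) := α + β ψ(r d)` with `d = b - a`, so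
`‖c(r)‖ = 1`. If no element of `S` is divisible by `m ∣ n`, the eigenvalues sum to zero along each
coset `r + ⟨n/m⟩`, hence the product of `c` along it is `1`. Apply this to `m = p, q`. If `α = 0`
the products give `p d = q d = 0`, so `d = 0`. If `α ≠ 0`, `‖c(0)‖ = ‖c(1)‖ = 1` forces
`ψ(d) = -1`; since `n/p` and `n/q` are even, `c` is constant on the cosets, so
`c(r)^p = c(r)^q = 1`, `c ≡ 1`, and `c(0) = α + β`, `c(1) = α - β` give `β = 0`.
-/

open Topology ComplexConjugate

section MatrixExp

attribute [local instance] Matrix.linftyOpNormedRing Matrix.linftyOpNormedAlgebra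

theorem Matrix.vecMul_exp_of_vecMul_eq_smul {ι 𝕂 : Type*} [Fintype ι] [DecidableEq ι] [RCLike 𝕂]
    {M : Matrix ι ι 𝕂} {w : ι → 𝕂} {μ : 𝕂} (h : w ᵥ* M = μ • w) :
    w ᵥ* NormedSpace.exp M = NormedSpace.exp μ • w := by
  have hpow : ∀ k : ℕ, w ᵥ* M ^ k = μ ^ k • w := by
    intro k
    induction k with
    | zero => simp
    | succ k ih =>
      rw [pow_succ, ← Matrix.vecMul_vecMul, ih, Matrix.smul_vecMul, h, smul_smul, pow_succ]
  let vecMulHom : Matrix ι ι 𝕂 →+ (ι → 𝕂) :=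
    AddMonoidHom.mk' (w ᵥ* ·) (fun A B => Matrix.vecMul_add A B w)
  have hM := (NormedSpace.exp_series_hasSum_exp' (𝕂 := 𝕂) M).map vecMulHom
    (continuous_const.matrix_vecMul continuous_id)
  have hμ := (NormedSpace.exp_series_hasSum_exp' (𝕂 := 𝕂) μ).smul_const w
  refine hM.unique ?_
  simpa [vecMulHom, Function.comp_def, Matrix.vecMul_smul, hpow, smul_smul] using hμ

end MatrixExp

theorem prod_eq_one_of_tendsto_exp {J : Type*} {s : Finset J} {μ c : J → ℂ} {t : ℕ → ℝ}
    (hsum : ∑ j ∈ s, μ j = 0)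
    (h : ∀ j ∈ s, Tendsto (fun k => Complex.exp (-(Complex.I * t k) * μ j)) atTop (𝓝 (c j))) :
    ∏ j ∈ s, c j = 1 := by
  have hprod := tendsto_finsetProd s h
  simp only [← Complex.exp_sum, ← Finset.mul_sum, hsum, mul_zero, Complex.exp_zero] at hprod
  exact tendsto_nhds_unique hprod tendsto_const_nhds

theorem Complex.im_eq_zero_of_norm_add_mul_eq_one {α β z : ℂ} (hα : α ≠ 0) (hβ : β ≠ 0)
    (hαβ : ‖α‖ ^ 2 + ‖β‖ ^ 2 = 1) (h₁ : ‖α + β‖ = 1) (hz : ‖z‖ = 1) (hαβz : ‖α + β * z‖ = 1) :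
    z.im = 0 := by
  have hre : ∀ w : ℂ, ‖w‖ = 1 → ‖α + β * w‖ = 1 → (α * conj β * conj w).re = 0 := by
    intro w hw hαβw
    have := Complex.normSq_add α (β * w)
    simp only [Complex.normSq_eq_norm_sq, hw, hαβw, map_mul] at this
    rw [mul_assoc]
    linarith
  have hu0 := hre 1 (by simp) (by simpa using h₁)
  simp only [map_one, mul_one] at hu0
  have hu : (α * conj β).im ≠ 0 := fun him =>
    mul_ne_zero hα ((map_ne_zero _).mpr hβ) (Complex.ext hu0 him)
  have := hre z hz hαβz
  simp only [Complex.mul_re (α * conj β), hu0, Complex.conj_im, zero_mul, zero_sub, mul_neg,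
    neg_neg] at this
  exact (mul_eq_zero.mp this).resolve_left hu

theorem Complex.eq_neg_one_of_norm_eq_one_of_im_eq_zero {z : ℂ} (hz : ‖z‖ = 1) (him : z.im = 0)
    (hne : z ≠ 1) : z = -1 := by
  have hre : z = (z.re : ℂ) := Complex.ext rfl (by simp [him])
  rw [hre, Complex.norm_real, Real.norm_eq_abs] at hz
  rcases abs_eq zero_le_one |>.mp hz with h | h
  · exact absurd (by rw [hre, h]; simp) hne
  · rw [hre, h]; simp

section Cayley

variable {G : Type*} [AddCommGroup G]

def cayEigenvalue (S : Finset G) (χ : AddChar G ℂ) : ℂ := ∑ s ∈ S, χ s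

variable [Fintype G]

theorem conj_cayEigenvalue {S : Finset G} (hS : ∀ s ∈ S, -s ∈ S) (χ : AddChar G ℂ) :
    conj (cayEigenvalue S χ) = cayEigenvalue S χ := by
  rw [cayEigenvalue, map_sum]
  exact Finset.sum_nbij' Neg.neg Neg.neg hS hS (fun s _ => neg_neg s) (fun s _ => neg_neg s)
    (fun s _ => (χ.map_neg_eq_conj s).symm)

theorem norm_exp_mul_cayEigenvalue {S : Finset G} (hS : ∀ s ∈ S, -s ∈ S) (χ : AddChar G ℂ)
    (t : ℝ) : ‖Complex.exp (-(Complex.I * t) * cayEigenvalue S χ)‖ = 1 := by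
  have him : (cayEigenvalue S χ).im = 0 := Complex.conj_eq_iff_im.mp (conj_cayEigenvalue hS χ)
  simp [Complex.norm_exp, Complex.mul_re, him]

variable [DecidableEq G]

theorem addChar_vecMul_cayAdj (S : Finset G) (χ : AddChar G ℂ) :
    ⇑χ ᵥ* cayAdj S = cayEigenvalue S χ • ⇑χ := by
  ext y
  calc (⇑χ ᵥ* cayAdj S) y = ∑ x, if x - y ∈ S then χ x else 0 := by
        simp [Matrix.vecMul, dotProduct, cayAdj]
    _ = ∑ s, if s ∈ S then χ (s + y) else 0 :=
        Fintype.sum_equiv (Equiv.subRight y) _ _ (fun x => by simp)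
    _ = (cayEigenvalue S χ • ⇑χ) y := by
        simp [cayEigenvalue, AddChar.map_add_eq_mul, Finset.sum_mul]

theorem addChar_vecMul_cayH (S : Finset G) (χ : AddChar G ℂ) (t : ℝ) :
    ⇑χ ᵥ* cayH S t = Complex.exp (-(Complex.I * t) * cayEigenvalue S χ) • ⇑χ := by
  rw [cayH, Matrix.vecMul_exp_of_vecMul_eq_smul, Complex.exp_eq_exp_ℂ]
  rw [Matrix.vecMul_smul, addChar_vecMul_cayAdj, smul_smul]

theorem tendsto_exp_cayEigenvalue {S : Finset G} {a b : G} {α β : ℂ} {t : ℕ → ℝ}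
    (htend : Tendsto (fun k => cayH S (t k) *ᵥ Pi.single a 1) atTop
      (𝓝 (α • Pi.single a 1 + β • Pi.single b 1))) (χ : AddChar G ℂ) :
    Tendsto (fun k => Complex.exp (-(Complex.I * t k) * cayEigenvalue S χ)) atTop
      (𝓝 (α + β * χ (b - a))) := by
  have hcoeff := (((continuous_const (y := ⇑χ)).dotProduct continuous_id).tendsto _).comp htend
  have hχa : χ a * χ (-a) = 1 := by
    rw [← AddChar.map_add_eq_mul, add_neg_cancel, AddChar.map_zero_eq_one]
  convert hcoeff.mul_const (χ (-a)) using 2 with k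
  · rw [Function.comp_apply, id, Matrix.dotProduct_mulVec, addChar_vecMul_cayH, smul_dotProduct,
      dotProduct_single, smul_eq_mul, mul_one, mul_assoc, hχa, mul_one]
  · rw [id, dotProduct_add, dotProduct_smul, dotProduct_smul, dotProduct_single,
      dotProduct_single, sub_eq_add_neg, AddChar.map_add_eq_mul]
    linear_combination -α * hχa

theorem norm_add_mul_addChar_eq_one_of_tendsto {S : Finset G} (hS : ∀ s ∈ S, -s ∈ S)
    {a b : G} {α β : ℂ} {t : ℕ → ℝ}
    (htend : Tendsto (fun k => cayH S (t k) *ᵥ Pi.single a 1) atTop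
      (𝓝 (α • Pi.single a 1 + β • Pi.single b 1))) (χ : AddChar G ℂ) :
    ‖α + β * χ (b - a)‖ = 1 := by
  have hnorm := (tendsto_exp_cayEigenvalue htend χ).norm
  simp only [norm_exp_mul_cayEigenvalue hS] at hnorm
  exact tendsto_nhds_unique hnorm tendsto_const_nhds

end Cayley

local notation "ψ" => ZMod.stdAddChar

namespace ZMod

variable {n : ℕ} [NeZero n]

theorem stdAddChar_eq_one_iff {x : ZMod n} : ψ x = 1 ↔ x = 0 :=
  injective_stdAddChar.eq_iff' (AddChar.map_zero_eq_one _)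

theorem natCast_div_mul_eq_zero_iff {m : ℕ} (hm : m ∣ n) (s : ZMod n) :
    ((n / m : ℕ) : ZMod n) * s = 0 ↔ m ∣ s.val := by
  have hn : 0 < n := Nat.pos_of_ne_zero (NeZero.ne n)
  have hnm : 0 < n / m := Nat.div_pos (Nat.le_of_dvd hn hm) (Nat.pos_of_dvd_of_pos hm hn)
  have hcast : ((n / m : ℕ) : ZMod n) * s = ((n / m * s.val : ℕ) : ZMod n) := by
    rw [Nat.cast_mul, natCast_zmod_val]
  rw [hcast, natCast_eq_zero_iff]
  calc n ∣ n / m * s.val ↔ n / m * m ∣ n / m * s.val := by rw [Nat.div_mul_cancel hm]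
    _ ↔ m ∣ s.val := Nat.mul_dvd_mul_iff_left hnm

theorem sum_stdAddChar_coset_mul_eq_zero {m : ℕ} (hm : m ∣ n) {s : ZMod n} (hs : ¬ m ∣ s.val)
    (r : ZMod n) :
    ∑ j ∈ Finset.range m, ψ ((r + (j : ZMod n) * ((n / m : ℕ) : ZMod n)) * s) = 0 := by
  set ω := ψ (((n / m : ℕ) : ZMod n) * s)
  have hω : ω ≠ 1 := fun h =>
    hs ((natCast_div_mul_eq_zero_iff hm s).mp (stdAddChar_eq_one_iff.mp h))
  have hωm : ω ^ m = 1 := by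
    rw [← AddChar.map_nsmul_eq_pow, nsmul_eq_mul, ← mul_assoc, ← Nat.cast_mul,
      Nat.mul_div_cancel' hm, natCast_self, zero_mul, AddChar.map_zero_eq_one]
  have hterm : ∀ j : ℕ,
      ψ ((r + (j : ZMod n) * ((n / m : ℕ) : ZMod n)) * s) = ψ (r * s) * ω ^ j := fun j => by
    rw [← AddChar.map_nsmul_eq_pow, ← AddChar.map_add_eq_mul, nsmul_eq_mul]
    ring_nf
  simp only [hterm, ← Finset.mul_sum, geom_sum_eq hω, hωm, sub_self, zero_div, mul_zero]

theorem sum_cayEigenvalue_mulShift_coset_eq_zero {S : Finset (ZMod n)} {m : ℕ} (hm : m ∣ n)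
    (hS : ∀ s ∈ S, ¬ m ∣ s.val) (r : ZMod n) :
    ∑ j ∈ Finset.range m,
      cayEigenvalue S (AddChar.mulShift ψ (r + (j : ZMod n) * ((n / m : ℕ) : ZMod n))) = 0 := by
  simp only [cayEigenvalue, AddChar.mulShift_apply]
  rw [Finset.sum_comm]
  exact Finset.sum_eq_zero fun s hs => sum_stdAddChar_coset_mul_eq_zero hm (hS s hs) r

theorem stdAddChar_eq_neg_one_of_norm_add_mul_eq_one {α β : ℂ} {d : ZMod n} (hα : α ≠ 0)
    (hβ : β ≠ 0) (hαβ : ‖α‖ ^ 2 + ‖β‖ ^ 2 = 1) (hd : d ≠ 0)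
    (hnorm : ∀ r : ZMod n, ‖α + β * ψ (r * d)‖ = 1) : ψ d = -1 := by
  refine Complex.eq_neg_one_of_norm_eq_one_of_im_eq_zero (AddChar.norm_apply _ _) ?_
    (mt stdAddChar_eq_one_iff.mp hd)
  exact Complex.im_eq_zero_of_norm_add_mul_eq_one hα hβ hαβ (by simpa using hnorm 0)
    (AddChar.norm_apply _ _) (by simpa using hnorm 1)

theorem nsmul_eq_zero_of_prod_coset_eq_one {β : ℂ} {g d : ZMod n} {m : ℕ}
    (h : ∀ r : ZMod n, ∏ j ∈ Finset.range m, β * ψ ((r + (j : ZMod n) * g) * d) = 1) :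
    m • d = 0 := by
  have hshift (j : ℕ) :
      β * ψ ((1 + (j : ZMod n) * g) * d) = β * ψ ((0 + (j : ZMod n) * g) * d) * ψ d := by
    rw [mul_assoc, ← AddChar.map_add_eq_mul]
    ring_nf
  have h1 := h 1
  simp only [hshift, Finset.prod_mul_distrib, h 0, Finset.prod_const, Finset.card_range,
    one_mul, ← AddChar.map_nsmul_eq_pow] at h1
  exact stdAddChar_eq_one_iff.mp h1

theorem pow_eq_one_of_prod_coset_eq_one {α β : ℂ} {d : ZMod n} (hd : ψ d = -1) {m : ℕ}
    (hm : 2 * m ∣ n)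
    (h : ∀ r : ZMod n, ∏ j ∈ Finset.range m,
      (α + β * ψ ((r + (j : ZMod n) * ((n / m : ℕ) : ZMod n)) * d)) = 1)
    (r : ZMod n) : (α + β * ψ (r * d)) ^ m = 1 := by
  have heven : Even (n / m) := by
    obtain ⟨k, hk⟩ := hm
    have hm0 : m ≠ 0 := by rintro rfl; exact NeZero.ne n (by simpa using hk)
    rw [hk, mul_comm 2 m, mul_assoc, Nat.mul_div_cancel_left _ (Nat.pos_of_ne_zero hm0)]
    exact even_two_mul k
  have hperiodic : ∀ j : ℕ, ψ ((r + (j : ZMod n) * ((n / m : ℕ) : ZMod n)) * d) = ψ (r * d) :=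
    fun j => by
      rw [add_mul, AddChar.map_add_eq_mul, ← Nat.cast_mul, ← nsmul_eq_mul,
        AddChar.map_nsmul_eq_pow, hd, (heven.mul_left j).neg_one_pow, mul_one]
  simpa only [hperiodic, Finset.prod_const, Finset.card_range] using h r

end ZMod

theorem stmt_10_general (p q n : ℕ) [NeZero n] (hp : p.Prime) (hq : q.Prime)
    (hpq : p ≠ q) (hn : 2 * p * q ∣ n)
    (S : Finset (ZMod n)) (hSsym : ∀ y ∈ S, -y ∈ S)
    (h : ∃ a b : ZMod n, a ≠ b ∧ ExhibitsPGFR S a b) :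
    ∃ y ∈ S, p ∣ y.val ∨ q ∣ y.val := by
  by_contra! hS
  obtain ⟨a, b, hab, α, β, t, hβ, hαβ, htend⟩ := h
  set d := b - a
  have hd : d ≠ 0 := sub_ne_zero.mpr hab.symm
  have hcop : p.gcd q = 1 := (Nat.coprime_primes hp hq).mpr hpq
  have hnorm (r : ZMod n) : ‖α + β * ψ (r * d)‖ = 1 := by
    simpa using norm_add_mul_addChar_eq_one_of_tendsto hSsym htend (AddChar.mulShift ψ r)
  have hprod (m : ℕ) (hm : m ∣ n) (hmS : ∀ s ∈ S, ¬ m ∣ s.val) (r : ZMod n) :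
      ∏ j ∈ Finset.range m, (α + β * ψ ((r + (j : ZMod n) * ((n / m : ℕ) : ZMod n)) * d)) = 1 :=
    prod_eq_one_of_tendsto_exp (ZMod.sum_cayEigenvalue_mulShift_coset_eq_zero hm hmS r)
      fun j _ => by simpa using tendsto_exp_cayEigenvalue htend (AddChar.mulShift ψ _)
  have h2p : 2 * p ∣ n := (dvd_mul_right _ q).trans hn
  have h2q : 2 * q ∣ n := (Dvd.intro_left p (by ring)).trans hn
  have hprodp := hprod p ((dvd_mul_left p 2).trans h2p) fun s hs => (hS s hs).1
  have hprodq := hprod q ((dvd_mul_left q 2).trans h2q) fun s hs => (hS s hs).2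
  by_cases hα : α = 0
  · subst hα
    simp only [zero_add] at hprodp hprodq
    apply hd
    simpa [hcop] using gcd_nsmul_eq_zero.mpr ⟨ZMod.nsmul_eq_zero_of_prod_coset_eq_one hprodp,
      ZMod.nsmul_eq_zero_of_prod_coset_eq_one hprodq⟩
  · have hψd := ZMod.stdAddChar_eq_neg_one_of_norm_add_mul_eq_one hα hβ hαβ hd hnorm
    have hone (r : ZMod n) : α + β * ψ (r * d) = 1 := by
      simpa [hcop] using pow_gcd_eq_one.mpr ⟨ZMod.pow_eq_one_of_prod_coset_eq_one hψd h2p hprodp r,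
        ZMod.pow_eq_one_of_prod_coset_eq_one hψd h2q hprodq r⟩
    have h0 := hone 0
    have h1 := hone 1
    simp only [zero_mul, AddChar.map_zero_eq_one, mul_one, one_mul, hψd] at h0 h1
    exact hβ (by linear_combination (h0 - h1) / 2)

theorem stmt_10 (p q n : ℕ) [NeZero n] (hp : p.Prime) (hq : q.Prime)
    (hpodd : Odd p) (hqodd : Odd q) (hpq : p ≠ q) (hn : 2 * p * q ∣ n)
    (S : Finset (ZMod n)) (hS0 : (0 : ZMod n) ∉ S) (hSsym : ∀ y ∈ S, -y ∈ S)
    (h : ∃ a b : ZMod n, a ≠ b ∧ ExhibitsPGFR S a b) :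
    ∃ y ∈ S, p ∣ y.val ∨ q ∣ y.val :=
  stmt_10_general p q n hp hq hpq hn S hSsym h
end

section
/- Let p and q be distinct odd primes and let n be a positive integer divisible by 2pq. Let S be a symmetric subset of ℤ_n \ {0}. If the complement of the circulant graph Cay(ℤ_n, S), namely Cay(ℤ_n, ℤ_n \ (S ∪ {0})), exhibits PGFR between some pair of distinct vertices, then there exists y ∈ S such that p divides the representative of y in {0,…,n−1} or q divides the representative of y in {0,…,n−1} (equivalently, y maps to 0 under the natural projection ℤ_n → ℤ_p or under ℤ_n → ℤ_q). -/
open Matrix Filter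

/-!
For `r ∈ ℤ_n` the character `ψ_r : x ↦ ψ (r x)` is a left eigenvector of the adjacency matrix of
`Cay(ℤ_n, T)`, `T = ℤ_n \ (S ∪ {0})`, with eigenvalue `λ_r = ∑_{z ∈ T} ψ (r z)`, which is real
because `T` is symmetric. Pairing `H(t_k) e_a` with `ψ_r` turns PGFR into
`exp (-i t_k λ_r) → α + β ω ^ r` with `ω = ψ (b - a)`, so in particular `|α + β ω ^ r| = 1`.

Suppose no element of `S` is divisible by `p`. Then `T` contains every nonzero multiple of `p`,
and orthogonality of characters gives `∑_{j < p} λ_{s + j n/p} = -p` for `s = 1, 2`. Taking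
limits, `∏_{j < p} (α + β ω ^ (1 + j n/p)) = ∏_{j < p} (α + β ω ^ (2 + j n/p))`, and likewise
for `q`. If `α = 0` this says `ω ^ p = ω ^ q = 1`. Otherwise `|α + β| = |α + β ω| = 1` forces
`ω = ± 1`; if `ω = -1`, then since `n/p` and `n/q` are even the relations read
`(α - β) ^ p = (α + β) ^ p` and `(α - β) ^ q = (α + β) ^ q`, whence `β = 0`. As `p` and `q` are
coprime, `ω = 1` in every case, i.e. `a = b`.
-/

open Finset Topology ComplexConjugate

namespace Matrix

variable {m : Type*} [Fintype m] [DecidableEq m]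

theorem vecMul_exp_of_vecMul_eq_smul_s11 {M : Matrix m m ℂ} {v : m → ℂ} {μ : ℂ}
    (h : v ᵥ* M = μ • v) : v ᵥ* NormedSpace.exp M = NormedSpace.exp μ • v := by
  let _ : NormedRing (Matrix m m ℂ) := Matrix.linftyOpNormedRing
  let _ : NormedAlgebra ℂ (Matrix m m ℂ) := Matrix.linftyOpNormedAlgebra
  have hpow (k : ℕ) : v ᵥ* M ^ k = μ ^ k • v := by
    induction k with
    | zero => simp
    | succ k ih => rw [pow_succ, ← vecMul_vecMul, ih, smul_vecMul, h, smul_smul, pow_succ]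
  let L := vecMulBilin ℂ ℂ (n := m) v
  have hM := (NormedSpace.exp_series_hasSum_exp' (𝕂 := ℂ) M).map L
    (LinearMap.continuous_of_finiteDimensional L)
  have hμ := (NormedSpace.exp_series_hasSum_exp' (𝕂 := ℂ) μ).smul_const v
  refine hM.unique (hμ.congr_fun fun k => ?_)
  simp [L, hpow, smul_smul]

end Matrix

theorem im_sum_addChar_eq_zero {G : Type*} [AddCommGroup G] [Finite G] {T : Finset G}
    (hT : ∀ z ∈ T, -z ∈ T) (χ : AddChar G ℂ) : (∑ z ∈ T, χ z).im = 0 := by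
  rw [← Complex.conj_eq_iff_im, map_sum]
  refine sum_nbij' Neg.neg Neg.neg (fun z hz => hT z hz) (fun z hz => hT z hz) ?_ ?_ ?_ <;>
    simp [AddChar.map_neg_eq_conj]

section CayleyGraph

variable {G : Type*} [AddCommGroup G] [Fintype G] [DecidableEq G]

theorem vecMul_cayAdj_addChar (T : Finset G) (χ : AddChar G ℂ) :
    ⇑χ ᵥ* cayAdj T = (∑ z ∈ T, χ z) • ⇑χ := by
  funext y
  simp only [vecMul, dotProduct, cayAdj, of_apply, mul_ite, mul_one, mul_zero, Pi.smul_apply,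
    smul_eq_mul, sum_mul]
  rw [← sum_filter]
  refine sum_nbij' (· - y) (· + y) ?_ ?_ ?_ ?_ ?_ <;> simp [← AddChar.map_add_eq_mul]

theorem vecMul_cayH_addChar (T : Finset G) (t : ℝ) (χ : AddChar G ℂ) :
    ⇑χ ᵥ* cayH T t = Complex.exp (-(Complex.I * t) * ∑ z ∈ T, χ z) • ⇑χ := by
  rw [Complex.exp_eq_exp_ℂ]
  refine Matrix.vecMul_exp_of_vecMul_eq_smul_s11 ?_
  rw [vecMul_smul, vecMul_cayAdj_addChar, smul_smul]

variable {T : Finset G} {a b : G} {α β : ℂ} {t : ℕ → ℝ}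

theorem tendsto_cexp_sum_addChar
    (h : Tendsto (fun k => cayH T (t k) *ᵥ Pi.single a 1) atTop
      (𝓝 (α • Pi.single a 1 + β • Pi.single b 1))) (χ : AddChar G ℂ) :
    Tendsto (fun k => Complex.exp (-(Complex.I * t k) * ∑ z ∈ T, χ z)) atTop
      (𝓝 (α + β * χ (b - a))) := by
  have hχ : χ (-a) * χ a = 1 := by
    rw [← AddChar.map_add_eq_mul, neg_add_cancel, AddChar.map_zero_eq_one]
  have hcont : Continuous fun w : G → ℂ => χ (-a) * (⇑χ ⬝ᵥ w) :=
    continuous_const.mul <|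
      continuous_finsetSum _ fun x _ => continuous_const.mul (continuous_apply x)
  convert (hcont.tendsto _).comp h using 1
  · funext k
    rw [Function.comp_apply, dotProduct_mulVec, vecMul_cayH_addChar, dotProduct_single,
      Pi.smul_apply, smul_eq_mul, mul_one, mul_left_comm, hχ, mul_one]
  · congr 1
    rw [dotProduct_add, dotProduct_smul, dotProduct_smul, dotProduct_single, dotProduct_single,
      sub_eq_neg_add, AddChar.map_add_eq_mul]
    simp only [smul_eq_mul, mul_one]
    linear_combination -α * hχ

theorem norm_add_mul_addChar_eq_one (hT : ∀ z ∈ T, -z ∈ T)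
    (h : Tendsto (fun k => cayH T (t k) *ᵥ Pi.single a 1) atTop
      (𝓝 (α • Pi.single a 1 + β • Pi.single b 1))) (χ : AddChar G ℂ) :
    ‖α + β * χ (b - a)‖ = 1 := by
  have hnorm (k : ℕ) : ‖Complex.exp (-(Complex.I * t k) * ∑ z ∈ T, χ z)‖ = 1 := by
    simp [Complex.norm_exp, im_sum_addChar_eq_zero hT χ]
  exact tendsto_nhds_unique ((tendsto_cexp_sum_addChar h χ).norm.congr hnorm) tendsto_const_nhds

end CayleyGraph

theorem prod_eq_prod_of_tendsto_cexp {ι κ : Type*} {s : Finset ι} {μ f : κ → ℂ} {t : ℕ → ℝ}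
    (hf : ∀ r, Tendsto (fun k => Complex.exp (-(Complex.I * t k) * μ r)) atTop (𝓝 (f r)))
    {r₁ r₂ : ι → κ} (h : ∑ i ∈ s, μ (r₁ i) = ∑ i ∈ s, μ (r₂ i)) :
    ∏ i ∈ s, f (r₁ i) = ∏ i ∈ s, f (r₂ i) := by
  have hprod (r : ι → κ) : Tendsto
      (fun k => Complex.exp (-(Complex.I * t k) * ∑ i ∈ s, μ (r i))) atTop
      (𝓝 (∏ i ∈ s, f (r i))) := by
    simpa only [mul_sum, Complex.exp_sum] using tendsto_finsetProd s fun i _ => hf (r i)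
  exact tendsto_nhds_unique (hprod r₁) (h ▸ hprod r₂)

theorem AddChar.sum_range_map_add_nsmul {G K : Type*} [AddCommGroup G] [DecidableEq G] [Field K]
    {ψ : AddChar G K} (hψ : Function.Injective ψ) {p : ℕ} {y : G} (hy : p • y = 0) (x : G) :
    ∑ j ∈ range p, ψ (x + j • y) = if y = 0 then p * ψ x else 0 := by
  simp_rw [AddChar.map_add_eq_mul, AddChar.map_nsmul_eq_pow, ← mul_sum]
  split_ifs with hy0
  · simp [hy0, mul_comm]
  · have hψy : ψ y ≠ 1 := fun h => hy0 (hψ (h.trans (AddChar.map_zero_eq_one ψ).symm))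
    rw [geom_sum_eq hψy, ← AddChar.map_nsmul_eq_pow, hy, AddChar.map_zero_eq_one, sub_self,
      zero_div, mul_zero]

namespace ZMod

variable {n : ℕ} [NeZero n]

theorem natCast_mul_eq_zero_iff_dvd_val {p m : ℕ} (hpm : p * m = n) (z : ZMod n) :
    (m : ZMod n) * z = 0 ↔ p ∣ z.val := by
  have hm : m ≠ 0 := by rintro rfl; exact NeZero.ne n (by simp [← hpm])
  conv_lhs => rw [← natCast_zmod_val z, ← Nat.cast_mul, natCast_eq_zero_iff]
  generalize z.val = k
  subst hpm
  rw [mul_comm m, mul_dvd_mul_iff_right hm]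

local notation "ψ" => stdAddChar (N := n)

theorem sum_range_sum_stdAddChar {p m : ℕ} (hpm : p * m = n) (U : Finset (ZMod n)) (s : ℕ) :
    ∑ j ∈ range p, ∑ z ∈ U, ψ ((s + j * m : ℕ) * z) =
      p * ∑ z ∈ U with (m : ZMod n) * z = 0, ψ (s * z) := by
  have hnsmul (z : ZMod n) : p • ((m : ZMod n) * z) = 0 := by
    rw [nsmul_eq_mul, ← mul_assoc, ← Nat.cast_mul, hpm, natCast_self, zero_mul]
  rw [sum_comm, sum_filter, mul_sum]
  refine sum_congr rfl fun z _ => ?_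
  have hsplit (j : ℕ) : ((s + j * m : ℕ) : ZMod n) * z = s * z + j • ((m : ZMod n) * z) := by
    push_cast; rw [nsmul_eq_mul]; ring
  simp_rw [hsplit, AddChar.sum_range_map_add_nsmul injective_stdAddChar (hnsmul z), mul_ite,
    mul_zero]

theorem sum_range_sum_univ_stdAddChar {p m : ℕ} (hpm : p * m = n) {s : ℕ} (hs0 : 0 < s)
    (hsm : s < m) : ∑ j ∈ range p, ∑ z : ZMod n, ψ ((s + j * m : ℕ) * z) = 0 := by
  refine sum_eq_zero fun j hj => ?_
  have hne : ((s + j * m : ℕ) : ZMod n) ≠ 0 := by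
    rw [Ne, natCast_eq_zero_iff]
    refine Nat.not_dvd_of_pos_of_lt (by omega) ?_
    rw [← hpm]
    nlinarith [mem_range.mp hj]
  have := AddChar.sum_mulShift ((s + j * m : ℕ) : ZMod n) (isPrimitive_stdAddChar n)
  rw [if_neg hne, Nat.cast_zero] at this
  simpa only [mul_comm] using this

theorem sum_range_sum_compl_stdAddChar {p m : ℕ} (hpm : p * m = n) {s : ℕ} (hs0 : 0 < s)
    (hsm : s < m) {S : Finset (ZMod n)} (hS : ∀ y ∈ S, ¬ p ∣ y.val) :
    ∑ j ∈ range p, ∑ z ∈ univ \ (S ∪ {0}), ψ ((s + j * m : ℕ) * z) = -p := by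
  have hfilter : {z ∈ S ∪ {0} | (m : ZMod n) * z = 0} = {0} := by
    ext z
    simp only [mem_filter, mem_union, mem_singleton]
    constructor
    · rintro ⟨hz | hz, hmz⟩
      exacts [absurd ((natCast_mul_eq_zero_iff_dvd_val hpm z).mp hmz) (hS z hz), hz]
    · rintro rfl
      simp
  simp_rw [sum_sdiff_eq_sub (subset_univ _), sum_sub_distrib,
    sum_range_sum_univ_stdAddChar hpm hs0 hsm, sum_range_sum_stdAddChar hpm, hfilter]
  simp

theorem prod_range_eq_of_tendsto_cexp {p m : ℕ} (hpm : p * m = n) (hm : 2 < m)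
    {S : Finset (ZMod n)} (hS : ∀ y ∈ S, ¬ p ∣ y.val) {f : ℕ → ℂ} {t : ℕ → ℝ}
    (hf : ∀ k : ℕ, Tendsto (fun i => Complex.exp (-(Complex.I * t i) *
      ∑ z ∈ univ \ (S ∪ {0}), ψ (k * z))) atTop (𝓝 (f k))) :
    ∏ j ∈ range p, f (1 + j * m) = ∏ j ∈ range p, f (2 + j * m) :=
  prod_eq_prod_of_tendsto_cexp hf <| by
    rw [sum_range_sum_compl_stdAddChar hpm one_pos (by omega) hS,
      sum_range_sum_compl_stdAddChar hpm two_pos hm hS]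

end ZMod

theorem re_mul_conj_eq_zero_of_norm_add_mul_eq_one {α β z : ℂ}
    (hnorm : ‖α‖ ^ 2 + ‖β‖ ^ 2 = 1) (hz : ‖z‖ = 1) (h : ‖α + β * z‖ = 1) :
    (α * conj β * conj z).re = 0 := by
  have := Complex.normSq_add α (β * z)
  simp only [Complex.normSq_eq_norm_sq, h, hz, map_mul] at this
  rw [mul_assoc]
  linarith

theorem eq_neg_one_of_norm_add_mul_eq_one {α β ω : ℂ} (hα : α ≠ 0) (hβ : β ≠ 0)
    (hnorm : ‖α‖ ^ 2 + ‖β‖ ^ 2 = 1) (hω : ‖ω‖ = 1) (hω1 : ω ≠ 1)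
    (h0 : ‖α + β‖ = 1) (h1 : ‖α + β * ω‖ = 1) : ω = -1 := by
  set w := α * conj β
  have hre : w.re = 0 := by
    have := re_mul_conj_eq_zero_of_norm_add_mul_eq_one hnorm norm_one (by rwa [mul_one])
    rwa [map_one, mul_one] at this
  have him : w.im ≠ 0 := fun him =>
    mul_ne_zero hα ((map_ne_zero _).mpr hβ) (Complex.ext hre him)
  have hωim : ω.im = 0 := by
    have := re_mul_conj_eq_zero_of_norm_add_mul_eq_one hnorm hω h1
    rw [Complex.mul_re, Complex.conj_re, Complex.conj_im, hre] at this
    exact (mul_eq_zero.mp (by linarith : w.im * ω.im = 0)).resolve_left him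
  have hωreal : ω = (ω.re : ℂ) := Complex.ext rfl (by simp [hωim])
  rw [hωreal, Complex.norm_real, Real.norm_eq_abs, abs_eq zero_le_one] at hω
  rcases hω with h | h
  · exact absurd (by rw [hωreal, h, Complex.ofReal_one]) hω1
  · rw [hωreal, h, Complex.ofReal_neg, Complex.ofReal_one]

theorem pow_eq_one_of_prod_range_mul_pow_eq {β ω : ℂ} (hβ : β ≠ 0) (hω : ω ≠ 0) {p m : ℕ}
    (h : ∏ j ∈ range p, β * ω ^ (1 + j * m) = ∏ j ∈ range p, β * ω ^ (2 + j * m)) :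
    ω ^ p = 1 := by
  have hshift : ∏ j ∈ range p, β * ω ^ (2 + j * m) =
      (∏ j ∈ range p, β * ω ^ (1 + j * m)) * ω ^ p := by
    have := prod_mul_pow_card (s := range p) (f := fun j => β * ω ^ (1 + j * m)) (b := ω)
    rw [card_range] at this
    rw [this]
    exact prod_congr rfl fun j _ => by ring
  have hX : ∏ j ∈ range p, β * ω ^ (1 + j * m) ≠ 0 :=
    prod_ne_zero_iff.mpr fun j _ => mul_ne_zero hβ (pow_ne_zero _ hω)
  rw [hshift] at h
  exact mul_left_cancel₀ hX (h.symm.trans (mul_one _).symm)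

theorem sub_pow_eq_add_pow_of_prod_range_eq {α β : ℂ} {p m : ℕ} (hm : Even m)
    (h : ∏ j ∈ range p, (α + β * (-1) ^ (1 + j * m)) =
      ∏ j ∈ range p, (α + β * (-1) ^ (2 + j * m))) :
    (α - β) ^ p = (α + β) ^ p := by
  have hsign (s j : ℕ) : (-1 : ℂ) ^ (s + j * m) = (-1) ^ s := by
    rw [pow_add, (hm.mul_left j).neg_one_pow, mul_one]
  simp_rw [hsign, prod_const, card_range] at h
  simpa [← sub_eq_add_neg] using h

theorem eq_one_of_prod_range_add_mul_pow_eq {α β ω : ℂ} (hβ : β ≠ 0)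
    (hnorm : ‖α‖ ^ 2 + ‖β‖ ^ 2 = 1) (hω : ‖ω‖ = 1) (h0 : ‖α + β‖ = 1)
    (h1 : ‖α + β * ω‖ = 1)
    {p q mp mq : ℕ} (hpq : p.Coprime q) (hmp : Even mp) (hmq : Even mq)
    (hp : ∏ j ∈ range p, (α + β * ω ^ (1 + j * mp)) =
      ∏ j ∈ range p, (α + β * ω ^ (2 + j * mp)))
    (hq : ∏ j ∈ range q, (α + β * ω ^ (1 + j * mq)) =
      ∏ j ∈ range q, (α + β * ω ^ (2 + j * mq))) :
    ω = 1 := by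
  by_cases hα : α = 0
  · subst hα
    simp only [zero_add] at hp hq
    have hω0 : ω ≠ 0 := by rintro rfl; simp at hω
    exact (pow_eq_one_iff_of_coprime hpq).mp ⟨pow_eq_one_of_prod_range_mul_pow_eq hβ hω0 hp,
      pow_eq_one_of_prod_range_mul_pow_eq hβ hω0 hq⟩
  by_contra hω1
  have hω' := eq_neg_one_of_norm_add_mul_eq_one hα hβ hnorm hω hω1 h0 h1
  subst hω'
  have hadd : α + β ≠ 0 := by rintro h; simp [h] at h0
  have hratio : (α - β) / (α + β) = 1 := by
    refine (pow_eq_one_iff_of_coprime hpq).mp ⟨?_, ?_⟩ <;>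
      rw [div_pow, div_eq_one_iff_eq (pow_ne_zero _ hadd)]
    exacts [sub_pow_eq_add_pow_of_prod_range_eq hmp hp, sub_pow_eq_add_pow_of_prod_range_eq hmq hq]
  rw [div_eq_one_iff_eq hadd] at hratio
  exact hβ (by linear_combination -hratio / 2)

theorem stmt_11_general (p q n : ℕ) [NeZero n] (hp : p.Prime) (hq : q.Prime)
    (hpq : p ≠ q) (hn : 2 * p * q ∣ n)
    (S : Finset (ZMod n)) (hSsym : ∀ y ∈ S, -y ∈ S)
    (h : ∃ a b : ZMod n, a ≠ b ∧
        ExhibitsPGFR (Finset.univ \ (S ∪ {0})) a b) :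
    ∃ y ∈ S, p ∣ y.val ∨ q ∣ y.val := by
  by_contra! hS
  obtain ⟨a, b, hab, α, β, t, hβ, hnorm, htend⟩ := h
  set T : Finset (ZMod n) := univ \ (S ∪ {0})
  have hT : ∀ z ∈ T, -z ∈ T := by
    intro z hz
    simp only [T, Finset.mem_sdiff, mem_univ, mem_union, mem_singleton, neg_eq_zero, true_and,
      not_or] at hz ⊢
    exact ⟨fun h => hz.1 (neg_neg z ▸ hSsym _ h), hz.2⟩
  set ω := ZMod.stdAddChar (b - a)
  have hchar (k : ℕ) : ZMod.stdAddChar.mulShift (k : ZMod n) (b - a) = ω ^ k := by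
    rw [AddChar.mulShift_apply, ← nsmul_eq_mul, AddChar.map_nsmul_eq_pow]
  have hunit (k : ℕ) : ‖α + β * ω ^ k‖ = 1 :=
    hchar k ▸ norm_add_mul_addChar_eq_one hT htend _
  have hlim (k : ℕ) : Tendsto (fun i => Complex.exp (-(Complex.I * t i) *
      ∑ z ∈ T, ZMod.stdAddChar ((k : ZMod n) * z))) atTop (𝓝 (α + β * ω ^ k)) := by
    simpa only [hchar, AddChar.mulShift_apply] using
      tendsto_cexp_sum_addChar htend (ZMod.stdAddChar.mulShift k)
  obtain ⟨e, he⟩ := hn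
  have he0 : 0 < e := Nat.pos_of_ne_zero <| by rintro rfl; exact NeZero.ne n (by simpa using he)
  have hω : ω = 1 := eq_one_of_prod_range_add_mul_pow_eq hβ hnorm (AddChar.norm_apply _ _)
    (by simpa using hunit 0) (by simpa using hunit 1) ((Nat.coprime_primes hp hq).mpr hpq)
    (even_two_mul (q * e)) (even_two_mul (p * e))
    (ZMod.prod_range_eq_of_tendsto_cexp (m := 2 * (q * e)) (by rw [he]; ring)
      (by nlinarith [hq.two_le]) (fun y hy => (hS y hy).1) hlim)
    (ZMod.prod_range_eq_of_tendsto_cexp (m := 2 * (p * e)) (by rw [he]; ring)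
      (by nlinarith [hp.two_le]) (fun y hy => (hS y hy).2) hlim)
  exact hab (sub_eq_zero.mp <| ZMod.injective_stdAddChar <|
    hω.trans (AddChar.map_zero_eq_one _).symm).symm

theorem stmt_11 (p q n : ℕ) [NeZero n] (hp : p.Prime) (hq : q.Prime)
    (hpodd : Odd p) (hqodd : Odd q) (hpq : p ≠ q) (hn : 2 * p * q ∣ n)
    (S : Finset (ZMod n)) (hS0 : (0 : ZMod n) ∉ S) (hSsym : ∀ y ∈ S, -y ∈ S)
    (h : ∃ a b : ZMod n, a ≠ b ∧
        ExhibitsPGFR (Finset.univ \ (S ∪ {0})) a b) :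
    ∃ y ∈ S, p ∣ y.val ∨ q ∣ y.val :=
  stmt_11_general p q n hp hq hpq hn S hSsym h
end
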